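/- arXiv:hep-th/9401127 — 2 statements merged into one kernel-verified Lean document; each statement's English description precedes it below -/
import Mathlib

section
/- The Sklyanin bracket on A is compatible with the comultiplication: for all f, h ∈ A, Δ{f,h} = {Δf, Δh}, where the bracket on A ⊗ A is defined by {x⊗y, z⊗w} = {x,z}⊗yw + xz⊗{y,w}. -/
open scoped TensorProduct

noncomputable section
set_option synthInstance.maxHeartbeats 1000000
set_option maxHeartbeats 1000000


private lemma half_mod {M : Type*} [AddCommGroup M] [Module ℂ M] {x : M} (hx : x = -x) :
    x = 0 := by
  have h2 : (2:ℂ) • x = 0 := by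
    rw [two_smul]; nth_rewrite 2 [hx]; rw [add_neg_cancel]
  have h3 := congrArg (fun y => ((2:ℂ)⁻¹) • y) h2
  simp only [smul_smul] at h3
  norm_num at h3
  exact h3

private lemma sk_key {R : Type} [CommRing R] [Algebra ℂ R] (a b c d : R)
    (β : R → R → R)
    (hadd1 : ∀ x y z : R, β (x + y) z = β x z + β y z)
    (hadd2 : ∀ x y z : R, β x (y + z) = β x y + β x z)
    (hsmul : ∀ (t : ℂ) (x y : R), β (t • x) y = t • β x y)
    (hanti : ∀ x y : R, β x y = - β y x)
    (hleib : ∀ x y z : R, β (x * y) z = x * β y z + β x z * y)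
    (hab : β a b = -(a * b)) (hac : β a c = -(a * c)) (hbd : β b d = -(b * d))
    (hcd : β c d = -(c * d)) (hcb : β c b = 0) (had : β a d = -(2 * (b * c)))
    (Δ : R →ₐ[ℂ] R ⊗[ℂ] R)
    (hΔa : Δ a = a ⊗ₜ a + b ⊗ₜ c) (hΔb : Δ b = a ⊗ₜ b + b ⊗ₜ d)
    (hΔc : Δ c = c ⊗ₜ a + d ⊗ₜ c) (hΔd : Δ d = c ⊗ₜ b + d ⊗ₜ d)
    (B : R ⊗[ℂ] R → R ⊗[ℂ] R → R ⊗[ℂ] R)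
    (hB1 : ∀ x x' y, B (x + x') y = B x y + B x' y)
    (hB2 : ∀ x y y', B x (y + y') = B x y + B x y')
    (hBt : ∀ x y z w : R, B (x ⊗ₜ y) (z ⊗ₜ w) = β x z ⊗ₜ (y * w) + (x * z) ⊗ₜ β y w) :
    ∀ f h : R, f ∈ Algebra.adjoin ℂ ({a, b, c, d} : Set R) →
      h ∈ Algebra.adjoin ℂ ({a, b, c, d} : Set R) → Δ (β f h) = B (Δ f) (Δ h) := by
  -- basic consequences for β
  have hone : ∀ y, β 1 y = 0 := by
    intro y
    have h := hleib 1 1 y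
    simp only [one_mul, mul_one] at h
    exact left_eq_add.mp h
  have halg1 : ∀ (t : ℂ) (y : R), β (algebraMap ℂ R t) y = 0 := fun t y => by
    rw [Algebra.algebraMap_eq_smul_one, hsmul, hone, smul_zero]
  have halg2 : ∀ (t : ℂ) (y : R), β y (algebraMap ℂ R t) = 0 := fun t y => by
    rw [hanti, halg1, neg_zero]
  have hdiag : ∀ x, β x x = 0 := fun x => half_mod (hanti x x)
  have hleib2 : ∀ x y z : R, β x (y * z) = y * β x z + β x y * z := fun x y z => by
    rw [hanti x (y * z), hleib y z x, hanti z x, hanti y x]; ring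
  have hba : β b a = a * b := by rw [hanti, hab]; ring
  have hca : β c a = a * c := by rw [hanti, hac]; ring
  have hdb : β d b = b * d := by rw [hanti, hbd]; ring
  have hdc : β d c = c * d := by rw [hanti, hcd]; ring
  have hbc : β b c = 0 := by rw [hanti, hcb, neg_zero]
  have hda : β d a = 2 * (b * c) := by rw [hanti, had]; ring
  -- basic consequences for B
  have hBz1 : ∀ w, B 0 w = 0 := fun w => by
    have h := hB1 0 0 w
    rw [add_zero] at h
    exact left_eq_add.mp h
  have hBz2 : ∀ w, B w 0 = 0 := fun w => by
    have h := hB2 w 0 0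
    rw [add_zero] at h
    exact left_eq_add.mp h
  have hBleib1 : ∀ u v w, B (u * v) w = u * B v w + B u w * v := by
    intro u v w
    induction w using TensorProduct.induction_on with
    | zero => rw [hBz2, hBz2, hBz2, mul_zero, zero_mul, add_zero]
    | tmul z w' =>
      induction u using TensorProduct.induction_on with
      | zero => simp [hBz1]
      | tmul x y =>
        induction v using TensorProduct.induction_on with
        | zero => rw [mul_zero, hBz1, mul_zero, mul_zero, zero_add]
        | tmul x' y' =>
          rw [Algebra.TensorProduct.tmul_mul_tmul, hBt, hBt, hBt, hleib, hleib]
          simp only [TensorProduct.add_tmul, TensorProduct.tmul_add, mul_add, add_mul,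
            Algebra.TensorProduct.tmul_mul_tmul]
          ring_nf
        | add v1 v2 ih1 ih2 => rw [mul_add, hB1, hB1, ih1, ih2]; ring
      | add u1 u2 ih1 ih2 => rw [add_mul, hB1, hB1, ih1, ih2]; ring
    | add w1 w2 ih1 ih2 => rw [hB2, hB2, hB2, ih1, ih2]; ring
  have hBleib2 : ∀ u v w, B w (u * v) = u * B w v + B w u * v := by
    intro u v w
    induction w using TensorProduct.induction_on with
    | zero => rw [hBz1, hBz1, hBz1, mul_zero, zero_mul, add_zero]
    | tmul z w' =>
      induction u using TensorProduct.induction_on with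
      | zero => simp [hBz2]
      | tmul x y =>
        induction v using TensorProduct.induction_on with
        | zero => rw [mul_zero, hBz2, mul_zero, mul_zero, zero_add]
        | tmul x' y' =>
          rw [Algebra.TensorProduct.tmul_mul_tmul, hBt, hBt, hBt, hleib2, hleib2]
          simp only [TensorProduct.add_tmul, TensorProduct.tmul_add, mul_add, add_mul,
            Algebra.TensorProduct.tmul_mul_tmul]
          ring_nf
        | add v1 v2 ih1 ih2 => rw [mul_add, hB2, hB2, ih1, ih2]; ring
      | add u1 u2 ih1 ih2 => rw [add_mul, hB2, hB2, ih1, ih2]; ring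
    | add w1 w2 ih1 ih2 => rw [hB1, hB1, hB1, ih1, ih2]; ring
  have hBanti : ∀ u w, B u w = - B w u := by
    intro u w
    induction w using TensorProduct.induction_on with
    | zero => rw [hBz1, hBz2, neg_zero]
    | tmul z w' =>
      induction u using TensorProduct.induction_on with
      | zero => rw [hBz1, hBz2, neg_zero]
      | tmul x y =>
        rw [hBt, hBt, hanti x z, hanti y w', mul_comm z x, mul_comm w' y,
          TensorProduct.neg_tmul, TensorProduct.tmul_neg, neg_add]
      | add u1 u2 ih1 ih2 => rw [hB1, hB2, ih1, ih2, neg_add]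
    | add w1 w2 ih1 ih2 => rw [hB2, hB1, ih1, ih2, neg_add]
  have hBalg1 : ∀ (t : ℂ) w, B ((algebraMap ℂ (R ⊗[ℂ] R)) t) w = 0 := by
    intro t w
    have h1 : (algebraMap ℂ (R ⊗[ℂ] R)) t = (algebraMap ℂ R t) ⊗ₜ[ℂ] (1 : R) := by
      rw [Algebra.algebraMap_eq_smul_one, Algebra.TensorProduct.one_def,
        TensorProduct.smul_tmul', Algebra.algebraMap_eq_smul_one]
    rw [h1]
    induction w using TensorProduct.induction_on with
    | zero => exact hBz2 _
    | tmul z w' =>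
      rw [hBt, halg1, hone, TensorProduct.zero_tmul, TensorProduct.tmul_zero, add_zero]
    | add w1 w2 ih1 ih2 => rw [hB2, ih1, ih2, add_zero]
  have hBalg2 : ∀ (t : ℂ) w, B w ((algebraMap ℂ (R ⊗[ℂ] R)) t) = 0 := fun t w => by
    rw [hBanti, hBalg1, neg_zero]
  -- generator-generator cases
  have core_ab : Δ (β a b) = B (Δ a) (Δ b) ∧ Δ (β a c) = B (Δ a) (Δ c) ∧
      Δ (β a d) = B (Δ a) (Δ d) ∧ Δ (β b d) = B (Δ b) (Δ d) ∧
      Δ (β c d) = B (Δ c) (Δ d) ∧ Δ (β c b) = B (Δ c) (Δ b) := by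
    refine ⟨?_, ?_, ?_, ?_, ?_, ?_⟩ <;>
    · simp only [hab, hac, had, hbd, hcd, hcb, hba, hca, hda, hdb, hdc, hbc, hdiag, two_mul,
        map_add, map_neg, map_mul, map_zero, hΔa, hΔb, hΔc, hΔd, hB1, hB2, hBt,
        mul_add, add_mul, Algebra.TensorProduct.tmul_mul_tmul, TensorProduct.tmul_add,
        TensorProduct.add_tmul, TensorProduct.tmul_neg, TensorProduct.neg_tmul,
        TensorProduct.zero_tmul, TensorProduct.tmul_zero, add_zero, zero_add, neg_add]
      ring_nf
  obtain ⟨c1, c2, c3, c4, c5, c6⟩ := core_ab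
  have hdiagB : ∀ u : R, Δ (β u u) = B (Δ u) (Δ u) := fun u => by
    rw [hdiag, map_zero]
    exact (half_mod (hBanti (Δ u) (Δ u))).symm
  have flip : ∀ u v : R, Δ (β u v) = B (Δ u) (Δ v) → Δ (β v u) = B (Δ v) (Δ u) :=
    fun u v h => by rw [hanti v u, map_neg, h, hBanti (Δ u) (Δ v), neg_neg]
  have gg : ∀ u v : R, u ∈ ({a, b, c, d} : Set R) → v ∈ ({a, b, c, d} : Set R) →
      Δ (β u v) = B (Δ u) (Δ v) := by
    intro u v hu hv
    simp only [Set.mem_insert_iff, Set.mem_singleton_iff] at hu hv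
    rcases hu with rfl | rfl | rfl | rfl <;> rcases hv with rfl | rfl | rfl | rfl <;>
      first
        | exact hdiagB _
        | exact c1 | exact c2 | exact c3 | exact c4 | exact c5 | exact c6
        | exact flip _ _ c1 | exact flip _ _ c2 | exact flip _ _ c3
        | exact flip _ _ c4 | exact flip _ _ c5 | exact flip _ _ c6
  -- main double induction
  have main : ∀ u ∈ ({a, b, c, d} : Set R), ∀ v,
      v ∈ Algebra.adjoin ℂ ({a, b, c, d} : Set R) → Δ (β u v) = B (Δ u) (Δ v) := by
    intro u hu v hv
    induction hv using Algebra.adjoin_induction with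
    | mem x hx => exact gg u x hu hx
    | algebraMap t => rw [halg2, map_zero, AlgHom.commutes, hBalg2]
    | add x y hx hy ihx ihy => rw [hadd2, map_add, map_add, hB2, ihx, ihy]
    | mul x y hx hy ihx ihy =>
        rw [hleib2, map_add, map_mul, map_mul, map_mul, hBleib2, ihx, ihy]
  intro f h hf hh
  induction hf using Algebra.adjoin_induction with
  | mem x hx => exact main x hx h hh
  | algebraMap t => rw [halg1, map_zero, AlgHom.commutes, hBalg1]
  | add x y hx hy ihx ihy => rw [hadd1, map_add, map_add, hB1, ihx, ihy]
  | mul x y hx hy ihx ihy =>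
      rw [hleib, map_add, map_mul, map_mul, map_mul, hBleib1, ihx, ihy]

/-- The polynomial ring `P = ℂ[a,b,c,d]`. -/
abbrev P : Type := MvPolynomial (Fin 4) ℂ

/-- The ideal generated by `ad - bc - 1`. -/
def Idet : Ideal P :=
  Ideal.span {MvPolynomial.X 0 * MvPolynomial.X 3 - MvPolynomial.X 1 * MvPolynomial.X 2 - 1}

/-- `A = ℂ[a,b,c,d]/(ad - bc - 1)`, the coordinate ring of `SL(2)`. -/
abbrev A : Type := P ⧸ Idet

def aA : A := Ideal.Quotient.mk Idet (MvPolynomial.X 0)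
def bA : A := Ideal.Quotient.mk Idet (MvPolynomial.X 1)
def cA : A := Ideal.Quotient.mk Idet (MvPolynomial.X 2)
def dA : A := Ideal.Quotient.mk Idet (MvPolynomial.X 3)

private lemma adjoin_top : Algebra.adjoin ℂ ({aA, bA, cA, dA} : Set A) = ⊤ := by
  rw [eq_top_iff]
  rintro x -
  obtain ⟨p, rfl⟩ := Ideal.Quotient.mk_surjective x
  induction p using MvPolynomial.induction_on with
  | C t => exact Subalgebra.algebraMap_mem _ t
  | add p q ihp ihq => rw [map_add]; exact add_mem ihp ihq
  | mul_X p i ih =>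
    rw [map_mul]
    refine mul_mem ih ?_
    fin_cases i
    · exact Algebra.subset_adjoin (Set.mem_insert _ _)
    · exact Algebra.subset_adjoin (Set.mem_insert_of_mem _ (Set.mem_insert _ _))
    · exact Algebra.subset_adjoin
        (Set.mem_insert_of_mem _ (Set.mem_insert_of_mem _ (Set.mem_insert _ _)))
    · exact Algebra.subset_adjoin
        (Set.mem_insert_of_mem _ (Set.mem_insert_of_mem _
          (Set.mem_insert_of_mem _ (Set.mem_singleton _))))

/-- `β` is the Sklyanin bracket on `A`: a ℂ-bilinear antisymmetric biderivation with the
prescribed values on the generators. -/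
def IsSklyaninA (β : A → A → A) : Prop :=
  (∀ x y z : A, β (x + y) z = β x z + β y z) ∧
  (∀ x y z : A, β x (y + z) = β x y + β x z) ∧
  (∀ (t : ℂ) (x y : A), β (t • x) y = t • β x y) ∧
  (∀ x y : A, β x y = - β y x) ∧
  (∀ x y z : A, β (x * y) z = x * β y z + β x z * y) ∧
  β aA bA = -(aA * bA) ∧ β aA cA = -(aA * cA) ∧ β bA dA = -(bA * dA) ∧
  β cA dA = -(cA * dA) ∧ β cA bA = 0 ∧ β aA dA = -(2 * (bA * cA))

/-- The Sklyanin bracket on `A` is compatible with the comultiplication: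
`Δ{f,h} = {Δf, Δh}` for all `f, h ∈ A`, where the bracket on `A ⊗ A` is determined by
`{x⊗y, z⊗w} = {x,z}⊗yw + xz⊗{y,w}`. -/
theorem sklyanin_poissonLie_compatible :
    ∀ β : A → A → A, IsSklyaninA β →
    ∀ Δ : A →ₐ[ℂ] A ⊗[ℂ] A,
      Δ aA = aA ⊗ₜ aA + bA ⊗ₜ cA → Δ bA = aA ⊗ₜ bA + bA ⊗ₜ dA →
      Δ cA = cA ⊗ₜ aA + dA ⊗ₜ cA → Δ dA = cA ⊗ₜ bA + dA ⊗ₜ dA →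
    ∀ B : A ⊗[ℂ] A → A ⊗[ℂ] A → A ⊗[ℂ] A,
      (∀ x x' y, B (x + x') y = B x y + B x' y) →
      (∀ x y y', B x (y + y') = B x y + B x y') →
      (∀ x y z w : A, B (x ⊗ₜ y) (z ⊗ₜ w) = β x z ⊗ₜ (y * w) + (x * z) ⊗ₜ β y w) →
    ∀ f h : A, Δ (β f h) = B (Δ f) (Δ h) := by
  intro β hβ Δ hΔa hΔb hΔc hΔd B hB1 hB2 hBt f h
  obtain ⟨h1, h2, h3, h4, h5, h6, h7, h8, h9, h10, h11⟩ := hβ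
  exact sk_key aA bA cA dA β h1 h2 h3 h4 h5 h6 h7 h8 h9 h10 h11 Δ hΔa hΔb hΔc hΔd
    B hB1 hB2 hBt f h (adjoin_top ▸ Algebra.mem_top) (adjoin_top ▸ Algebra.mem_top)
end
end

section
/- (Theorem 3, centrality) In the algebra Ã_q^I (and likewise in Ã_q^II), the quantum determinant det_q = ad − qbc is central: it commutes with each of the generators a, b, c, d, θ⁰, θ¹, θ². -/
open scoped TensorProduct

noncomputable section
set_option synthInstance.maxHeartbeats 1000000
set_option maxHeartbeats 1000000

/-- The free ℂ-algebra on the generators `a, b, c, d, θ⁰, θ¹, θ²`. -/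
abbrev F7 : Type := FreeAlgebra ℂ (Fin 7)

/-- The generators: `a = g 0`, `b = g 1`, `c = g 2`, `d = g 3`, `θ⁰ = g 4`, `θ¹ = g 5`,
`θ² = g 6`. -/
def g (i : Fin 7) : F7 := FreeAlgebra.ι ℂ i

/-- The defining relations of the quantum algebra (type TI). -/
inductive RelTI (q : ℂ) : F7 → F7 → Prop
  | rel_ab : RelTI q (g 0 * g 1) (q • (g 1 * g 0))
  | rel_ac : RelTI q (g 0 * g 2) (q • (g 2 * g 0))
  | rel_bc : RelTI q (g 1 * g 2) (g 2 * g 1)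
  | rel_bd : RelTI q (g 1 * g 3) (q • (g 3 * g 1))
  | rel_cd : RelTI q (g 2 * g 3) (q • (g 3 * g 2))
  | rel_adda : RelTI q (g 0 * g 3 - g 3 * g 0) ((q - q⁻¹) • (g 1 * g 2))
  | rel_t0a : RelTI q (g 4 * g 0) (g 0 * g 4 + (q ^ 2 * (q - q⁻¹)) • (g 2 * g 5))
  | rel_t1a : RelTI q (g 5 * g 0) (q⁻¹ • (g 0 * g 5))
  | rel_t2a : RelTI q (g 6 * g 0) (q • (g 0 * g 6) - ((q - q⁻¹) * (q + q⁻¹)) • (g 2 * g 4))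
  | rel_t0b : RelTI q (g 4 * g 1) (g 1 * g 4 + (q ^ 2 * (q - q⁻¹)) • (g 3 * g 5))
  | rel_t1b : RelTI q (g 5 * g 1) (q⁻¹ • (g 1 * g 5))
  | rel_t2b : RelTI q (g 6 * g 1) (q • (g 1 * g 6) - ((q - q⁻¹) * (q + q⁻¹)) • (g 3 * g 4))
  | rel_t0c : RelTI q (g 4 * g 2) (g 2 * g 4)
  | rel_t1c : RelTI q (g 5 * g 2) (q • (g 2 * g 5))
  | rel_t2c : RelTI q (g 6 * g 2) (q⁻¹ • (g 2 * g 6))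
  | rel_t0d : RelTI q (g 4 * g 3) (g 3 * g 4)
  | rel_t1d : RelTI q (g 5 * g 3) (q • (g 3 * g 5))
  | rel_t2d : RelTI q (g 6 * g 3) (q⁻¹ • (g 3 * g 6))
  | rel_th00 : RelTI q (g 4 * g 4) ((q ^ 2 * (q - q⁻¹) / (q + q⁻¹)) • (g 5 * g 6))
  | rel_th11 : RelTI q (g 5 * g 5) 0
  | rel_th22 : RelTI q (g 6 * g 6) 0
  | rel_th12 : RelTI q (g 5 * g 6) (-(g 6 * g 5))
  | rel_th10 : RelTI q (g 5 * g 4) ((-(q ^ 2)⁻¹) • (g 4 * g 5))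
  | rel_th20 : RelTI q (g 6 * g 4) ((-(q ^ 2)) • (g 4 * g 6))

/-- The type-I (without the determinant relation) quantum algebra. -/
abbrev MqTI (q : ℂ) : Type := RingQuot (RelTI q)

def mkTI (q : ℂ) : F7 →ₐ[ℂ] MqTI q := RingQuot.mkAlgHom ℂ (RelTI q)

def aTI (q : ℂ) : MqTI q := mkTI q (g 0)
def bTI (q : ℂ) : MqTI q := mkTI q (g 1)
def cTI (q : ℂ) : MqTI q := mkTI q (g 2)
def dTI (q : ℂ) : MqTI q := mkTI q (g 3)
def t0TI (q : ℂ) : MqTI q := mkTI q (g 4)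
def t1TI (q : ℂ) : MqTI q := mkTI q (g 5)
def t2TI (q : ℂ) : MqTI q := mkTI q (g 6)

/-- The defining relations of the quantum algebra (type TII). -/
inductive RelTII (q : ℂ) : F7 → F7 → Prop
  | rel_ab : RelTII q (g 0 * g 1) (q • (g 1 * g 0))
  | rel_ac : RelTII q (g 0 * g 2) (q • (g 2 * g 0))
  | rel_bc : RelTII q (g 1 * g 2) (g 2 * g 1)
  | rel_bd : RelTII q (g 1 * g 3) (q • (g 3 * g 1))
  | rel_cd : RelTII q (g 2 * g 3) (q • (g 3 * g 2))
  | rel_adda : RelTII q (g 0 * g 3 - g 3 * g 0) ((q - q⁻¹) • (g 1 * g 2))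
  | rel_t0a : RelTII q (g 4 * g 0) (g 0 * g 4)
  | rel_t1a : RelTII q (g 5 * g 0) (q • (g 0 * g 5))
  | rel_t2a : RelTII q (g 6 * g 0) (q⁻¹ • (g 0 * g 6))
  | rel_t0b : RelTII q (g 4 * g 1) (g 1 * g 4)
  | rel_t1b : RelTII q (g 5 * g 1) (q • (g 1 * g 5))
  | rel_t2b : RelTII q (g 6 * g 1) (q⁻¹ • (g 1 * g 6))
  | rel_t0c : RelTII q (g 4 * g 2) (g 2 * g 4 + (q - q⁻¹) • (g 0 * g 6))
  | rel_t1c : RelTII q (g 5 * g 2) (q⁻¹ • (g 2 * g 5) - ((q - q⁻¹) * (q + q⁻¹) / q ^ 2) • (g 0 * g 4))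
  | rel_t2c : RelTII q (g 6 * g 2) (q • (g 2 * g 6))
  | rel_t0d : RelTII q (g 4 * g 3) (g 3 * g 4 + (q - q⁻¹) • (g 1 * g 6))
  | rel_t1d : RelTII q (g 5 * g 3) (q⁻¹ • (g 3 * g 5) - ((q - q⁻¹) * (q + q⁻¹) / q ^ 2) • (g 1 * g 4))
  | rel_t2d : RelTII q (g 6 * g 3) (q • (g 3 * g 6))
  | rel_th00 : RelTII q (g 4 * g 4) ((q ^ 2 * (q - q⁻¹) / (q + q⁻¹)) • (g 5 * g 6))
  | rel_th11 : RelTII q (g 5 * g 5) 0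
  | rel_th22 : RelTII q (g 6 * g 6) 0
  | rel_th12 : RelTII q (g 5 * g 6) (-(g 6 * g 5))
  | rel_th10 : RelTII q (g 5 * g 4) ((-(q ^ 2)⁻¹) • (g 4 * g 5))
  | rel_th20 : RelTII q (g 6 * g 4) ((-(q ^ 2)) • (g 4 * g 6))

/-- The type-II (without the determinant relation) quantum algebra. -/
abbrev MqTII (q : ℂ) : Type := RingQuot (RelTII q)

def mkTII (q : ℂ) : F7 →ₐ[ℂ] MqTII q := RingQuot.mkAlgHom ℂ (RelTII q)

def aTII (q : ℂ) : MqTII q := mkTII q (g 0)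
def bTII (q : ℂ) : MqTII q := mkTII q (g 1)
def cTII (q : ℂ) : MqTII q := mkTII q (g 2)
def dTII (q : ℂ) : MqTII q := mkTII q (g 3)
def t0TII (q : ℂ) : MqTII q := mkTII q (g 4)
def t1TII (q : ℂ) : MqTII q := mkTII q (g 5)
def t2TII (q : ℂ) : MqTII q := mkTII q (g 6)

section CentralHelpers

variable {R : Type*} [Ring R] [Algebra ℂ R]

private lemma rev_smul {s : ℂ} (hs : s ≠ 0) {x y : R} (h : x = s • y) : y = s⁻¹ • x := by
  rw [h, smul_smul, inv_mul_cancel₀ hs, one_smul]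

private lemma e1 {X Y U V : R} {s : ℂ} (h : X*Y = s•(U*V)) (z : R) :
    X*(Y*z) = s•(U*(V*z)) := by rw [← mul_assoc, h, smul_mul_assoc, mul_assoc]

private lemma e2 {X Y U V : R} (h : X*Y = U*V) (z : R) :
    X*(Y*z) = U*(V*z) := by rw [← mul_assoc, h, mul_assoc]

private lemma e3 {X Y U V P Q : R} {s : ℂ} (h : X*Y = U*V + s•(P*Q)) (z : R) :
    X*(Y*z) = U*(V*z) + s•(P*(Q*z)) := by
  rw [← mul_assoc, h, add_mul, smul_mul_assoc, mul_assoc, mul_assoc]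

private lemma e4 {X Y U V P Q : R} {s t : ℂ} (h : X*Y = s•(U*V) - t•(P*Q)) (z : R) :
    X*(Y*z) = s•(U*(V*z)) - t•(P*(Q*z)) := by
  rw [← mul_assoc, h, sub_mul, smul_mul_assoc, smul_mul_assoc, mul_assoc, mul_assoc]

private lemma e6 {X Y U V P Q : R} {s : ℂ} (h : X*Y = U*V - s•(P*Q)) (z : R) :
    X*(Y*z) = U*(V*z) - s•(P*(Q*z)) := by
  rw [← mul_assoc, h, sub_mul, smul_mul_assoc, mul_assoc, mul_assoc]

private lemma centralI (q : ℂ) (hq : q ≠ 0)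
    (A B C D T0 T1 T2 : R)
    (hab : A*B = q•(B*A)) (hac : A*C = q•(C*A)) (hbc : B*C = C*B)
    (hbd : B*D = q•(D*B)) (hcd : C*D = q•(D*C))
    (had : A*D - D*A = (q - q⁻¹)•(B*C))
    (h0a : T0*A = A*T0 + (q^2*(q - q⁻¹))•(C*T1))
    (h1a : T1*A = q⁻¹•(A*T1))
    (h2a : T2*A = q•(A*T2) - ((q - q⁻¹)*(q + q⁻¹))•(C*T0))
    (h0b : T0*B = B*T0 + (q^2*(q - q⁻¹))•(D*T1))
    (h1b : T1*B = q⁻¹•(B*T1))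
    (h2b : T2*B = q•(B*T2) - ((q - q⁻¹)*(q + q⁻¹))•(D*T0))
    (h0c : T0*C = C*T0) (h1c : T1*C = q•(C*T1)) (h2c : T2*C = q⁻¹•(C*T2))
    (h0d : T0*D = D*T0) (h1d : T1*D = q•(D*T1)) (h2d : T2*D = q⁻¹•(D*T2)) :
    ((A*D - q•(B*C)) * A = A * (A*D - q•(B*C))) ∧
    ((A*D - q•(B*C)) * B = B * (A*D - q•(B*C))) ∧
    ((A*D - q•(B*C)) * C = C * (A*D - q•(B*C))) ∧
    ((A*D - q•(B*C)) * D = D * (A*D - q•(B*C))) ∧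
    ((A*D - q•(B*C)) * T0 = T0 * (A*D - q•(B*C))) ∧
    ((A*D - q•(B*C)) * T1 = T1 * (A*D - q•(B*C))) ∧
    ((A*D - q•(B*C)) * T2 = T2 * (A*D - q•(B*C))) := by
  have hba := rev_smul hq hab
  have hca := rev_smul hq hac
  have hcb := hbc.symm
  have hdb := rev_smul hq hbd
  have hdc := rev_smul hq hcd
  have hda : D*A = A*D - (q - q⁻¹)•(B*C) := by rw [← had]; abel
  refine ⟨?_, ?_, ?_, ?_, ?_, ?_, ?_⟩
  all_goals simp only [sub_mul, mul_sub, smul_mul_assoc, mul_smul_comm, mul_assoc,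
      mul_add, add_mul, smul_add, smul_sub, smul_smul,
      hba, e1 hba, hca, e1 hca, hcb, e2 hcb, hdb, e1 hdb, hdc, e1 hdc, hda, e6 hda,
      h0a, e3 h0a, h1a, e1 h1a, h2a, e4 h2a,
      h0b, e3 h0b, h1b, e1 h1b, h2b, e4 h2b,
      h0c, e2 h0c, h1c, e1 h1c, h2c, e1 h2c,
      h0d, e2 h0d, h1d, e1 h1d, h2d, e1 h2d]
  all_goals match_scalars <;> field_simp <;> ring

private lemma centralII (q : ℂ) (hq : q ≠ 0)
    (A B C D T0 T1 T2 : R)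
    (hab : A*B = q•(B*A)) (hac : A*C = q•(C*A)) (hbc : B*C = C*B)
    (hbd : B*D = q•(D*B)) (hcd : C*D = q•(D*C))
    (had : A*D - D*A = (q - q⁻¹)•(B*C))
    (h0a : T0*A = A*T0)
    (h1a : T1*A = q•(A*T1))
    (h2a : T2*A = q⁻¹•(A*T2))
    (h0b : T0*B = B*T0)
    (h1b : T1*B = q•(B*T1))
    (h2b : T2*B = q⁻¹•(B*T2))
    (h0c : T0*C = C*T0 + (q - q⁻¹)•(A*T2))
    (h1c : T1*C = q⁻¹•(C*T1) - ((q - q⁻¹)*(q + q⁻¹)/q^2)•(A*T0))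
    (h2c : T2*C = q•(C*T2))
    (h0d : T0*D = D*T0 + (q - q⁻¹)•(B*T2))
    (h1d : T1*D = q⁻¹•(D*T1) - ((q - q⁻¹)*(q + q⁻¹)/q^2)•(B*T0))
    (h2d : T2*D = q•(D*T2)) :
    ((A*D - q•(B*C)) * A = A * (A*D - q•(B*C))) ∧
    ((A*D - q•(B*C)) * B = B * (A*D - q•(B*C))) ∧
    ((A*D - q•(B*C)) * C = C * (A*D - q•(B*C))) ∧
    ((A*D - q•(B*C)) * D = D * (A*D - q•(B*C))) ∧
    ((A*D - q•(B*C)) * T0 = T0 * (A*D - q•(B*C))) ∧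
    ((A*D - q•(B*C)) * T1 = T1 * (A*D - q•(B*C))) ∧
    ((A*D - q•(B*C)) * T2 = T2 * (A*D - q•(B*C))) := by
  have hba := rev_smul hq hab
  have hca := rev_smul hq hac
  have hcb := hbc.symm
  have hdb := rev_smul hq hbd
  have hdc := rev_smul hq hcd
  have hda : D*A = A*D - (q - q⁻¹)•(B*C) := by rw [← had]; abel
  refine ⟨?_, ?_, ?_, ?_, ?_, ?_, ?_⟩
  all_goals simp only [sub_mul, mul_sub, smul_mul_assoc, mul_smul_comm, mul_assoc,
      mul_add, add_mul, smul_add, smul_sub, smul_smul,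
      hba, e1 hba, hca, e1 hca, hcb, e2 hcb, hdb, e1 hdb, hdc, e1 hdc, hda, e6 hda,
      h0a, e2 h0a, h1a, e1 h1a, h2a, e1 h2a,
      h0b, e2 h0b, h1b, e1 h1b, h2b, e1 h2b,
      h0c, e3 h0c, h1c, e4 h1c, h2c, e1 h2c,
      h0d, e3 h0d, h1d, e4 h1d, h2d, e1 h2d]
  all_goals match_scalars <;> field_simp <;> ring

end CentralHelpers

/-- **Theorem 3, centrality.** In `Ã_q^I` (and likewise in `Ã_q^II`) the
quantum determinant `det_q = ad − qbc` is central: it commutes with each of the generators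
`a, b, c, d, θ⁰, θ¹, θ²`. -/
theorem quantum_determinant_central (q : ℂ) (hq0 : q ≠ 0) (hq1 : q ≠ 1) (hqm1 : q ≠ -1) :
    (∀ i : Fin 7,
      Commute (mkTI q (g 0 * g 3 - q • (g 1 * g 2))) (mkTI q (g i))) ∧
    (∀ i : Fin 7,
      Commute (mkTII q (g 0 * g 3 - q • (g 1 * g 2))) (mkTII q (g i))) := by
  constructor
  · have K : ∀ {x y : F7}, RelTI q x y → mkTI q x = mkTI q y :=
      fun h => RingQuot.mkAlgHom_rel ℂ h
    have H := centralI q hq0 (mkTI q (g 0)) (mkTI q (g 1)) (mkTI q (g 2)) (mkTI q (g 3))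
      (mkTI q (g 4)) (mkTI q (g 5)) (mkTI q (g 6))
      (by simpa only [map_mul, map_smul, map_sub, map_add] using K RelTI.rel_ab)
      (by simpa only [map_mul, map_smul, map_sub, map_add] using K RelTI.rel_ac)
      (by simpa only [map_mul, map_smul, map_sub, map_add] using K RelTI.rel_bc)
      (by simpa only [map_mul, map_smul, map_sub, map_add] using K RelTI.rel_bd)
      (by simpa only [map_mul, map_smul, map_sub, map_add] using K RelTI.rel_cd)
      (by simpa only [map_mul, map_smul, map_sub, map_add] using K RelTI.rel_adda)
      (by simpa only [map_mul, map_smul, map_sub, map_add] using K RelTI.rel_t0a)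
      (by simpa only [map_mul, map_smul, map_sub, map_add] using K RelTI.rel_t1a)
      (by simpa only [map_mul, map_smul, map_sub, map_add] using K RelTI.rel_t2a)
      (by simpa only [map_mul, map_smul, map_sub, map_add] using K RelTI.rel_t0b)
      (by simpa only [map_mul, map_smul, map_sub, map_add] using K RelTI.rel_t1b)
      (by simpa only [map_mul, map_smul, map_sub, map_add] using K RelTI.rel_t2b)
      (by simpa only [map_mul, map_smul, map_sub, map_add] using K RelTI.rel_t0c)
      (by simpa only [map_mul, map_smul, map_sub, map_add] using K RelTI.rel_t1c)
      (by simpa only [map_mul, map_smul, map_sub, map_add] using K RelTI.rel_t2c)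
      (by simpa only [map_mul, map_smul, map_sub, map_add] using K RelTI.rel_t0d)
      (by simpa only [map_mul, map_smul, map_sub, map_add] using K RelTI.rel_t1d)
      (by simpa only [map_mul, map_smul, map_sub, map_add] using K RelTI.rel_t2d)
    intro i
    have hdet : mkTI q (g 0 * g 3 - q • (g 1 * g 2)) =
        mkTI q (g 0) * mkTI q (g 3) - q • (mkTI q (g 1) * mkTI q (g 2)) := by
      simp only [map_mul, map_smul, map_sub]
    rw [hdet]
    fin_cases i
    exacts [H.1, H.2.1, H.2.2.1, H.2.2.2.1, H.2.2.2.2.1, H.2.2.2.2.2.1, H.2.2.2.2.2.2]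
  · have K : ∀ {x y : F7}, RelTII q x y → mkTII q x = mkTII q y :=
      fun h => RingQuot.mkAlgHom_rel ℂ h
    have H := centralII q hq0 (mkTII q (g 0)) (mkTII q (g 1)) (mkTII q (g 2)) (mkTII q (g 3))
      (mkTII q (g 4)) (mkTII q (g 5)) (mkTII q (g 6))
      (by simpa only [map_mul, map_smul, map_sub, map_add] using K RelTII.rel_ab)
      (by simpa only [map_mul, map_smul, map_sub, map_add] using K RelTII.rel_ac)
      (by simpa only [map_mul, map_smul, map_sub, map_add] using K RelTII.rel_bc)
      (by simpa only [map_mul, map_smul, map_sub, map_add] using K RelTII.rel_bd)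
      (by simpa only [map_mul, map_smul, map_sub, map_add] using K RelTII.rel_cd)
      (by simpa only [map_mul, map_smul, map_sub, map_add] using K RelTII.rel_adda)
      (by simpa only [map_mul, map_smul, map_sub, map_add] using K RelTII.rel_t0a)
      (by simpa only [map_mul, map_smul, map_sub, map_add] using K RelTII.rel_t1a)
      (by simpa only [map_mul, map_smul, map_sub, map_add] using K RelTII.rel_t2a)
      (by simpa only [map_mul, map_smul, map_sub, map_add] using K RelTII.rel_t0b)
      (by simpa only [map_mul, map_smul, map_sub, map_add] using K RelTII.rel_t1b)
      (by simpa only [map_mul, map_smul, map_sub, map_add] using K RelTII.rel_t2b)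
      (by simpa only [map_mul, map_smul, map_sub, map_add] using K RelTII.rel_t0c)
      (by simpa only [map_mul, map_smul, map_sub, map_add] using K RelTII.rel_t1c)
      (by simpa only [map_mul, map_smul, map_sub, map_add] using K RelTII.rel_t2c)
      (by simpa only [map_mul, map_smul, map_sub, map_add] using K RelTII.rel_t0d)
      (by simpa only [map_mul, map_smul, map_sub, map_add] using K RelTII.rel_t1d)
      (by simpa only [map_mul, map_smul, map_sub, map_add] using K RelTII.rel_t2d)
    intro i
    have hdet : mkTII q (g 0 * g 3 - q • (g 1 * g 2)) =
        mkTII q (g 0) * mkTII q (g 3) - q • (mkTII q (g 1) * mkTII q (g 2)) := by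
      simp only [map_mul, map_smul, map_sub]
    rw [hdet]
    fin_cases i
    exacts [H.1, H.2.1, H.2.2.1, H.2.2.2.1, H.2.2.2.2.1, H.2.2.2.2.2.1, H.2.2.2.2.2.2]
end
end
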